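/- arXiv:2509.09885 — 2 statements merged into one kernel-verified Lean document; each statement's English description precedes it below -/
import Mathlib

section
/- Let N = pq where p and q are distinct primes, and let Σ = {(t, t²) : t ∈ ℤ/Nℤ} be the parabola in (ℤ/Nℤ)². Then for every function f : (ℤ/Nℤ)² → ℂ, ( (1/|Σ|) · Σ_{m∈Σ} |f̂(m)|² )^{1/2} ≤ √2 · N^{-1} · ( Σ_{x∈(ℤ/Nℤ)²} |f(x)|^{4/3} )^{3/4}. -/
open scoped BigOperators

/-- Normalized Fourier transform on `(ℤ/Nℤ)²`:
`f̂(m) = N⁻¹ ∑ₓ f(x) e^{-2πi (x·m)/N}` where `x·m = x₁m₁ + x₂m₂`. -/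
noncomputable def dft (N : ℕ) [NeZero N] (f : ZMod N × ZMod N → ℂ)
    (m : ZMod N × ZMod N) : ℂ :=
  (N : ℂ)⁻¹ * ∑ x : ZMod N × ZMod N,
    f x * Complex.exp (-2 * Real.pi * Complex.I *
      (((x.1 * m.1 + x.2 * m.2).val : ℕ) : ℂ) / (N : ℂ))

/-- The parabola `Σ = {(t, t²) : t ∈ ℤ/Nℤ}` in `(ℤ/Nℤ)²`. -/
def parabola (N : ℕ) [NeZero N] : Finset (ZMod N × ZMod N) :=
  Finset.univ.image (fun t : ZMod N => (t, t ^ 2))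


/-! With `a(t) = f̂(t, t²)` and the extension operator `E a (x) = ∑ₜ a(t) e((x₁t + x₂t²)/N)`,
duality gives `‖a‖₂² = N⁻¹ ⟨f, E a⟩`, so by Hölder it suffices to bound `‖E a‖₄`.
The square `(E a)²` is a character expansion whose coefficient at `s` is the sum of `a(t) a(u)`
over the solutions of `t + u = s₁, t² + u² = s₂`; Parseval and Cauchy–Schwarz then give
`‖E a‖₄⁴ ≤ C N² ‖a‖₂⁴` when each such system has at most `C` solutions.
Over `ℤ/p` the system has at most two solutions (`t` and `u` are the roots of one quadratic),
so `C = 4` over `ℤ/pq` by the Chinese remainder theorem. -/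

open Finset ComplexConjugate

section ParabolaAdd

variable {R : Type*} [CommRing R]

def parabolaAdd (t : R × R) : R × R := (t.1 + t.2, t.1 ^ 2 + t.2 ^ 2)

variable [Fintype R] [DecidableEq R]

lemma card_parabolaAdd_fiber_le_card (s : R × R) :
    #{t | parabolaAdd t = s} ≤ Fintype.card R := by
  refine card_le_card_of_injOn Prod.fst (by simp) fun t ht t' ht' hfst => ?_
  simp only [coe_filter, mem_univ, true_and, Set.mem_ofPred_eq, parabolaAdd,
    Prod.ext_iff] at ht ht'
  exact Prod.ext hfst (by linear_combination ht.1 - ht'.1 - hfst)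

lemma card_parabolaAdd_fiber_le_two [IsDomain R] (h2 : (2 : R) ≠ 0) (s : R × R) :
    #{t | parabolaAdd t = s} ≤ 2 := by
  obtain hempty | ⟨t, ht⟩ := (filter (parabolaAdd · = s) univ).eq_empty_or_nonempty
  · simp [hempty]
  -- a second point `t'` of the fiber has `t'.1` among the roots `t.1, t.2` of the same quadratic
  have hsub : ({t' | parabolaAdd t' = s} : Finset (R × R)) ⊆ {t, t.swap} := by
    intro t' ht'
    simp only [mem_filter, mem_univ, true_and] at ht ht'
    have hA := congrArg Prod.fst (ht.trans ht'.symm)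
    have hB := congrArg Prod.snd (ht.trans ht'.symm)
    simp only [parabolaAdd] at hA hB
    have hroot : 2 * ((t'.1 - t.1) * (t'.1 - t.2)) = 0 := by
      linear_combination (t.1 + t.2 + t'.1 + t'.2 - 2 * t'.1) * hA - hB
    rcases mul_eq_zero.mp ((mul_eq_zero.mp hroot).resolve_left h2) with h | h
    · have h1 : t'.1 = t.1 := sub_eq_zero.mp h
      simp [show t' = t from Prod.ext h1 (by linear_combination -hA - h1)]
    · have h1 : t'.1 = t.2 := sub_eq_zero.mp h
      have : t' = t.swap := Prod.ext h1 (by simp only [Prod.snd_swap]; linear_combination -hA - h1)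
      simp [this]
  exact (card_le_card hsub).trans card_le_two

lemma card_parabolaAdd_fiber_le_mul {R₁ R₂ : Type*} [CommRing R₁] [CommRing R₂]
    [Fintype R₁] [Fintype R₂] [DecidableEq R₁] [DecidableEq R₂]
    (e : R ≃+* R₁ × R₂) (s : R × R) :
    #{t | parabolaAdd t = s} ≤
      #{t | parabolaAdd t = ((e s.1).1, (e s.2).1)} *
        #{t | parabolaAdd t = ((e s.1).2, (e s.2).2)} := by
  rw [← card_product]
  refine card_le_card_of_injOn (fun t => (((e t.1).1, (e t.2).1), ((e t.1).2, (e t.2).2)))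
    ?_ fun t _ t' _ h => ?_
  · intro t ht
    simp only [coe_filter, mem_univ, true_and, Set.mem_ofPred_eq] at ht
    simp [parabolaAdd, ← ht]
  · simp only [Prod.mk.injEq] at h
    exact Prod.ext (e.injective (Prod.ext h.1.1 h.2.1)) (e.injective (Prod.ext h.1.2 h.2.2))

end ParabolaAdd

lemma card_parabolaAdd_fiber_zmod_le_two {p : ℕ} [Fact p.Prime] (s : ZMod p × ZMod p) :
    #{t | parabolaAdd t = s} ≤ 2 := by
  rcases eq_or_ne p 2 with rfl | hp2
  · exact (card_parabolaAdd_fiber_le_card s).trans (by simp)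
  · exact card_parabolaAdd_fiber_le_two (Ring.two_ne_zero (by rwa [ZMod.ringChar_zmod_n])) s

lemma card_parabolaAdd_fiber_zmod_mul_le_four {p q : ℕ} (hp : p.Prime) (hq : q.Prime)
    (hpq : p ≠ q) [NeZero (p * q)] (s : ZMod (p * q) × ZMod (p * q)) :
    #{t | parabolaAdd t = s} ≤ 4 := by
  have := Fact.mk hp
  have := Fact.mk hq
  exact (card_parabolaAdd_fiber_le_mul
    (ZMod.chineseRemainder ((Nat.coprime_primes hp hq).mpr hpq)) s).trans
    (Nat.mul_le_mul (card_parabolaAdd_fiber_zmod_le_two _) (card_parabolaAdd_fiber_zmod_le_two _))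

section Character

variable {R : Type*} [CommRing R] [Fintype R] {ψ : AddChar R ℂ}

variable (ψ) in
def parabolaExt (a : R → ℂ) (x : R × R) : ℂ :=
  ∑ t, a t * ψ (x.1 * t + x.2 * t ^ 2)

variable (ψ) in
def addCharTransform (f : R × R → ℂ) (m : R × R) : ℂ :=
  ∑ x, f x * ψ (-(x.1 * m.1 + x.2 * m.2))

lemma sum_conj_mul_addCharTransform_parabola (a : R → ℂ) (f : R × R → ℂ) :
    ∑ t, conj (a t) * addCharTransform ψ f (t, t ^ 2) = ∑ x, f x * conj (parabolaExt ψ a x) := by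
  simp only [addCharTransform, parabolaExt, map_sum, map_mul, ← AddChar.map_neg_eq_conj, mul_sum]
  rw [sum_comm]
  exact sum_congr rfl fun x _ => sum_congr rfl fun t _ => by ring

variable [DecidableEq R]

lemma sum_addChar_dot (hψ : ψ.IsPrimitive) (u : R × R) :
    ∑ x : R × R, ψ (x.1 * u.1 + x.2 * u.2) =
      if u = 0 then (Fintype.card R : ℂ) ^ 2 else 0 := by
  simp only [Fintype.sum_prod_type, AddChar.map_add_eq_mul, ← sum_mul_sum,
    AddChar.sum_mulShift _ hψ, Prod.ext_iff, Prod.fst_zero, Prod.snd_zero]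
  split_ifs <;> simp_all [sq]

lemma sum_norm_sq_sum_addChar_dot (hψ : ψ.IsPrimitive) (b : R × R → ℂ) :
    ∑ x : R × R, ‖∑ s, b s * ψ (x.1 * s.1 + x.2 * s.2)‖ ^ 2 =
      (Fintype.card R) ^ 2 * ∑ s, ‖b s‖ ^ 2 := by
  apply Complex.ofReal_injective
  push_cast
  simp only [← Complex.mul_conj', map_sum, map_mul, ← AddChar.map_neg_eq_conj, sum_mul_sum]
  calc ∑ x : R × R, ∑ s, ∑ s', b s * ψ (x.1 * s.1 + x.2 * s.2) *
          (conj (b s') * ψ (-(x.1 * s'.1 + x.2 * s'.2)))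
      = ∑ s, ∑ s', b s * conj (b s') *
          ∑ x : R × R, ψ (x.1 * (s - s').1 + x.2 * (s - s').2) := by
        rw [sum_comm]
        refine sum_congr rfl fun s _ => ?_
        rw [sum_comm]
        refine sum_congr rfl fun s' _ => ?_
        rw [mul_sum]
        refine sum_congr rfl fun x _ => ?_
        have hchar : ψ (x.1 * s.1 + x.2 * s.2) * ψ (-(x.1 * s'.1 + x.2 * s'.2)) =
            ψ (x.1 * (s - s').1 + x.2 * (s - s').2) := by
          rw [← AddChar.map_add_eq_mul, Prod.fst_sub, Prod.snd_sub]
          ring_nf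
        rw [← hchar]
        ring
    _ = (Fintype.card R) ^ 2 * ∑ s, b s * conj (b s) := by
        rw [mul_sum]
        refine sum_congr rfl fun s _ => ?_
        simp only [sum_addChar_dot hψ, sub_eq_zero, mul_ite, mul_zero, sum_ite_eq, mem_univ,
          if_true]
        ring

def parabolaSelfConv (a : R → ℂ) (s : R × R) : ℂ :=
  ∑ t with parabolaAdd t = s, a t.1 * a t.2

lemma parabolaExt_sq (a : R → ℂ) (x : R × R) :
    parabolaExt ψ a x ^ 2 = ∑ s, parabolaSelfConv a s * ψ (x.1 * s.1 + x.2 * s.2) := by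
  have hfiber : ∀ s, parabolaSelfConv a s * ψ (x.1 * s.1 + x.2 * s.2) =
      ∑ t with parabolaAdd t = s,
        a t.1 * a t.2 * ψ (x.1 * (parabolaAdd t).1 + x.2 * (parabolaAdd t).2) := by
    intro s
    rw [parabolaSelfConv, sum_mul]
    exact sum_congr rfl fun t ht => by rw [(mem_filter.mp ht).2]
  rw [sum_congr rfl fun s _ => hfiber s, sum_fiberwise, sq, parabolaExt, sum_mul_sum,
    ← Fintype.sum_prod_type']
  refine sum_congr rfl fun t _ => ?_
  have hchar : ψ (x.1 * t.1 + x.2 * t.1 ^ 2) * ψ (x.1 * t.2 + x.2 * t.2 ^ 2) =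
      ψ (x.1 * (parabolaAdd t).1 + x.2 * (parabolaAdd t).2) := by
    rw [← AddChar.map_add_eq_mul, parabolaAdd]
    ring_nf
  rw [← hchar]
  ring

lemma sum_norm_parabolaSelfConv_sq_le {C : ℕ} (hC : ∀ s : R × R, #{t | parabolaAdd t = s} ≤ C)
    (a : R → ℂ) :
    ∑ s, ‖parabolaSelfConv a s‖ ^ 2 ≤ C * (∑ t, ‖a t‖ ^ 2) ^ 2 := by
  have hfiber : ∀ s, ‖parabolaSelfConv a s‖ ^ 2 ≤
      C * ∑ t with parabolaAdd t = s, ‖a t.1‖ ^ 2 * ‖a t.2‖ ^ 2 := by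
    intro s
    calc ‖parabolaSelfConv a s‖ ^ 2
        ≤ (∑ t with parabolaAdd t = s, ‖a t.1‖ * ‖a t.2‖) ^ 2 := by
          gcongr
          exact (norm_sum_le _ _).trans_eq (by simp only [norm_mul])
      _ ≤ #{t | parabolaAdd t = s} * ∑ t with parabolaAdd t = s, (‖a t.1‖ * ‖a t.2‖) ^ 2 :=
          sq_sum_le_card_mul_sum_sq
      _ ≤ C * ∑ t with parabolaAdd t = s, ‖a t.1‖ ^ 2 * ‖a t.2‖ ^ 2 := by
          simp only [mul_pow]
          gcongr
          exact_mod_cast hC s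
  calc ∑ s, ‖parabolaSelfConv a s‖ ^ 2
      ≤ ∑ s, C * ∑ t with parabolaAdd t = s, ‖a t.1‖ ^ 2 * ‖a t.2‖ ^ 2 :=
        sum_le_sum fun s _ => hfiber s
    _ = C * (∑ t, ‖a t‖ ^ 2) ^ 2 := by
        rw [← mul_sum, sum_fiberwise, sq, sum_mul_sum, Fintype.sum_prod_type]

lemma sum_norm_parabolaExt_pow_four_le (hψ : ψ.IsPrimitive) {C : ℕ}
    (hC : ∀ s : R × R, #{t | parabolaAdd t = s} ≤ C) (a : R → ℂ) :
    ∑ x, ‖parabolaExt ψ a x‖ ^ 4 ≤ C * Fintype.card R ^ 2 * (∑ t, ‖a t‖ ^ 2) ^ 2 := by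
  calc ∑ x, ‖parabolaExt ψ a x‖ ^ 4
      = ∑ x : R × R, ‖∑ s, parabolaSelfConv a s * ψ (x.1 * s.1 + x.2 * s.2)‖ ^ 2 := by
        simp only [← parabolaExt_sq, norm_pow, ← pow_mul]
    _ = Fintype.card R ^ 2 * ∑ s, ‖parabolaSelfConv a s‖ ^ 2 :=
        sum_norm_sq_sum_addChar_dot hψ _
    _ ≤ Fintype.card R ^ 2 * (C * (∑ t, ‖a t‖ ^ 2) ^ 2) := by
        gcongr
        exact sum_norm_parabolaSelfConv_sq_le hC a
    _ = C * Fintype.card R ^ 2 * (∑ t, ‖a t‖ ^ 2) ^ 2 := by ring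

lemma sum_norm_mul_norm_parabolaExt_le (hψ : ψ.IsPrimitive)
    (hfiber : ∀ s : R × R, #{t | parabolaAdd t = s} ≤ 4) (a : R → ℂ) (f : R × R → ℂ) :
    ∑ x, ‖f x‖ * ‖parabolaExt ψ a x‖ ≤
      (∑ x, ‖f x‖ ^ ((4 : ℝ) / 3)) ^ ((3 : ℝ) / 4) *
        (Real.sqrt (2 * Fintype.card R) * Real.sqrt (∑ t, ‖a t‖ ^ 2)) := by
  set S := ∑ t, ‖a t‖ ^ 2
  have hHolder := Real.inner_le_Lp_mul_Lq_of_nonneg univ (f := fun x => ‖f x‖)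
    (g := fun x => ‖parabolaExt ψ a x‖) (p := 4 / 3) (q := 4)
    ⟨by norm_num, by norm_num, by norm_num⟩ (fun _ _ => norm_nonneg _) (fun _ _ => norm_nonneg _)
  have hL4 : ∑ x, ‖parabolaExt ψ a x‖ ^ 4 ≤ (2 * Fintype.card R * S) ^ 2 :=
    (sum_norm_parabolaExt_pow_four_le hψ hfiber a).trans_eq (by ring)
  refine hHolder.trans ?_
  norm_num only [Real.rpow_ofNat]
  gcongr
  calc (∑ x, ‖parabolaExt ψ a x‖ ^ 4) ^ ((1 : ℝ) / 4)
      ≤ ((2 * Fintype.card R * S) ^ 2) ^ ((1 : ℝ) / 4) :=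
        Real.rpow_le_rpow (by positivity) hL4 (by norm_num)
    _ = Real.sqrt (2 * Fintype.card R) * Real.sqrt S := by
        rw [← Real.sqrt_mul (by positivity), Real.sqrt_eq_rpow, ← Real.rpow_natCast,
          ← Real.rpow_mul (by positivity)]
        norm_num

end Character

section ZModN

variable {N : ℕ} [NeZero N]

lemma dft_eq_inv_mul_addCharTransform (f : ZMod N × ZMod N → ℂ) (m : ZMod N × ZMod N) :
    dft N f m = (N : ℂ)⁻¹ * addCharTransform ZMod.stdAddChar f m := by
  rw [dft, addCharTransform]
  congr 1
  refine sum_congr rfl fun x _ => ?_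
  congr 1
  set c := x.1 * m.1 + x.2 * m.2
  have hc : -c = ((-(c.val : ℤ) : ℤ) : ZMod N) := by
    push_cast
    rw [ZMod.natCast_zmod_val]
  rw [hc, ZMod.stdAddChar_coe]
  push_cast
  ring_nf

lemma sum_parabola {M : Type*} [AddCommMonoid M] (g : ZMod N × ZMod N → M) :
    ∑ m ∈ parabola N, g m = ∑ t, g (t, t ^ 2) :=
  sum_image fun _ _ _ _ h => congrArg Prod.fst h

lemma card_parabola : #(parabola N) = N := by
  rw [parabola, card_image_of_injective _ fun _ _ h => congrArg Prod.fst h, card_univ, ZMod.card]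

lemma sum_norm_dft_parabola_sq_le (f : ZMod N × ZMod N → ℂ) :
    ∑ t, ‖dft N f (t, t ^ 2)‖ ^ 2 ≤
      (N : ℝ)⁻¹ * ∑ x, ‖f x‖ *
        ‖parabolaExt ZMod.stdAddChar (fun t => dft N f (t, t ^ 2)) x‖ := by
  set a := fun t : ZMod N => dft N f (t, t ^ 2)
  have hdual : ((∑ t, ‖a t‖ ^ 2 : ℝ) : ℂ) =
      (N : ℂ)⁻¹ * ∑ x, f x * conj (parabolaExt ZMod.stdAddChar a x) := by
    rw [← sum_conj_mul_addCharTransform_parabola, mul_sum]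
    push_cast
    refine sum_congr rfl fun t _ => ?_
    rw [← Complex.mul_conj', mul_comm, mul_left_comm, ← dft_eq_inv_mul_addCharTransform]
  calc ∑ t, ‖a t‖ ^ 2 = ‖((∑ t, ‖a t‖ ^ 2 : ℝ) : ℂ)‖ := by
        rw [Complex.norm_real, Real.norm_of_nonneg (by positivity)]
    _ ≤ (N : ℝ)⁻¹ * ∑ x, ‖f x‖ * ‖parabolaExt ZMod.stdAddChar a x‖ := by
        rw [hdual, norm_mul, norm_inv, Complex.norm_natCast]
        gcongr
        exact (norm_sum_le _ _).trans_eq (by simp only [norm_mul, Complex.norm_conj])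

lemma restriction_of_card_parabolaAdd_fiber_le_four
    (hfiber : ∀ s : ZMod N × ZMod N, #{t | parabolaAdd t = s} ≤ 4)
    (f : ZMod N × ZMod N → ℂ) :
    (((parabola N).card : ℝ)⁻¹ *
        ∑ m ∈ parabola N, ‖dft N f m‖ ^ 2) ^ ((1 : ℝ) / 2) ≤
      Real.sqrt 2 * (N : ℝ)⁻¹ *
        (∑ x : ZMod N × ZMod N, ‖f x‖ ^ ((4 : ℝ) / 3)) ^ ((3 : ℝ) / 4) := by
  set S := ∑ t, ‖dft N f (t, t ^ 2)‖ ^ 2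
  set L := (∑ x : ZMod N × ZMod N, ‖f x‖ ^ ((4 : ℝ) / 3)) ^ ((3 : ℝ) / 4)
  have hN : (0 : ℝ) < N := by exact_mod_cast Nat.pos_of_ne_zero (NeZero.ne N)
  have hS : S ≤ (N : ℝ)⁻¹ * L * Real.sqrt (2 * N) * Real.sqrt S := by
    calc S ≤ (N : ℝ)⁻¹ * _ := sum_norm_dft_parabola_sq_le f
      _ ≤ (N : ℝ)⁻¹ * (L * (Real.sqrt (2 * Fintype.card (ZMod N)) * Real.sqrt S)) := by
          gcongr
          exact sum_norm_mul_norm_parabolaExt_le (ZMod.isPrimitive_stdAddChar N) hfiber _ f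
      _ = (N : ℝ)⁻¹ * L * Real.sqrt (2 * N) * Real.sqrt S := by rw [ZMod.card]; ring
  have hsqrtS : Real.sqrt S ≤ (N : ℝ)⁻¹ * L * Real.sqrt (2 * N) := by
    have : 0 ≤ (N : ℝ)⁻¹ * L * Real.sqrt (2 * N) := by positivity
    nlinarith [Real.sq_sqrt (show 0 ≤ S by positivity), Real.sqrt_nonneg S]
  rw [sum_parabola, card_parabola, ← Real.sqrt_eq_rpow, Real.sqrt_mul (by positivity)]
  calc Real.sqrt (N : ℝ)⁻¹ * Real.sqrt S
      ≤ Real.sqrt (N : ℝ)⁻¹ * ((N : ℝ)⁻¹ * L * Real.sqrt (2 * N)) := by gcongr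
    _ = Real.sqrt 2 * (N : ℝ)⁻¹ * L := by
        rw [Real.sqrt_mul' _ hN.le, Real.sqrt_inv]
        field_simp

end ZModN

theorem restriction_pq (p q : ℕ) (hp : p.Prime) (hq : q.Prime) (hpq : p ≠ q)
    (N : ℕ) (hN : N = p * q) [NeZero N]
    (f : ZMod N × ZMod N → ℂ) :
    (((parabola N).card : ℝ)⁻¹ *
        ∑ m ∈ parabola N, ‖dft N f m‖ ^ 2) ^ ((1 : ℝ) / 2) ≤
      Real.sqrt 2 * (N : ℝ)⁻¹ *
        (∑ x : ZMod N × ZMod N, ‖f x‖ ^ ((4 : ℝ) / 3)) ^ ((3 : ℝ) / 4) := by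
  subst hN
  exact restriction_of_card_parabolaAdd_fiber_le_four
    (card_parabolaAdd_fiber_zmod_mul_le_four hp hq hpq) f
end

section
/- For every ε > 0 there exists a constant C_ε > 0 such that the following uncertainty principle holds: for every squarefree positive integer N and every nonzero function f : (ℤ/Nℤ)² → ℂ that is supported in a set E ⊆ (ℤ/Nℤ)² and whose Fourier transform f̂ is supported in the parabola Σ = {(t, t²) : t ∈ ℤ/Nℤ}, one has |E| ≥ N^{2−2ε} / C_ε⁸. -/
/-!
By Fourier inversion `f` is a combination of the characters `x ↦ e(x·(t, t²))`. Plancherel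
gives `‖f‖₂ = ‖f̂‖₂`; applied to `f²`, whose Fourier transform is `N⁻¹ f̂ ⋆ f̂`, it gives
`N² ‖f‖₄⁴ = ‖f̂ ⋆ f̂‖₂² ≤ r ‖f̂‖₂⁴`, where `r` bounds the number of ways to write a point as a sum
of two points of the parabola. Such representations are roots of a quadratic modulo `N`, so by the
Chinese remainder theorem `r ≤ 2^ω(N)` for squarefree `N`. Cauchy–Schwarz on the support gives
`‖f‖₂⁴ ≤ |E| ‖f‖₄⁴`, hence `N² ≤ |E| 2^ω(N)`, and `2^ω(N) = O_δ(N^δ)` for every `δ > 0`.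
-/

open scoped BigOperators

open Finset Polynomial ComplexConjugate

theorem natCard_aeval_eq_zero_le_natDegree {A B : Type*} [CommRing A] [CommRing B] [IsDomain B]
    [Algebra A B] (P : A[X]) (hP : P.map (algebraMap A B) ≠ 0) :
    Nat.card {b : B // aeval b P = 0} ≤ P.natDegree := by
  have hsub : {b : B | aeval b P = 0} ⊆ P.rootSet B := fun b hb => mem_rootSet'.mpr ⟨hP, hb⟩
  calc Nat.card {b : B // aeval b P = 0} = Set.ncard {b : B | aeval b P = 0} :=
        (Nat.card_coe_set_eq _)
    _ ≤ Set.ncard (P.rootSet B) := Set.ncard_le_ncard hsub (P.rootSet_finite B)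
    _ ≤ P.natDegree := ncard_rootSet_le P B

theorem natCard_zmod_aeval_quadratic_le_two {p : ℕ} (hp : p.Prime) (b c : ℤ) :
    Nat.card {t : ZMod p // aeval t (C 2 * X ^ 2 + C b * X + C c) = 0} ≤ 2 := by
  have := Fact.mk hp
  by_cases h2 : (2 : ZMod p) = 0
  · have hp2 : p ∣ 2 := (ZMod.natCast_eq_zero_iff 2 p).mp (mod_cast h2)
    calc _ ≤ Nat.card (ZMod p) := Finite.card_subtype_le _
      _ = p := Nat.card_zmod p
      _ ≤ 2 := Nat.le_of_dvd two_pos hp2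
  · refine (natCard_aeval_eq_zero_le_natDegree _ fun h => h2 ?_).trans natDegree_quadratic_le
    have h2coeff := congrArg (coeff · 2) h
    simp only [Polynomial.map_add, Polynomial.map_mul, Polynomial.map_pow, map_C, map_X, coeff_add,
      coeff_C_mul, coeff_X_pow, coeff_X, coeff_C, coeff_zero] at h2coeff
    simpa using h2coeff

theorem natCard_zmod_mul_aeval_eq_zero {m n : ℕ} (hmn : m.Coprime n) (P : ℤ[X]) :
    Nat.card {t : ZMod (m * n) // aeval t P = 0} =
      Nat.card {t : ZMod m // aeval t P = 0} * Nat.card {t : ZMod n // aeval t P = 0} := by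
  rw [← Nat.card_prod]
  refine Nat.card_congr (((ZMod.chineseRemainder hmn).toEquiv.subtypeEquiv fun t => ?_).trans
    (Equiv.subtypeProdEquivProd))
  let e := (ZMod.chineseRemainder hmn).toIntAlgEquiv
  change aeval t P = 0 ↔ aeval (e t).1 P = 0 ∧ aeval (e t).2 P = 0
  rw [← Prod.mk_eq_zero, ← aeval_prod_apply, aeval_algHom_apply, map_eq_zero_iff _ e.injective]

theorem natCard_zmod_aeval_eq_zero_le_of_squarefree (P : ℤ[X]) (d : ℕ)
    (hP : ∀ p, p.Prime → Nat.card {t : ZMod p // aeval t P = 0} ≤ d) {N : ℕ}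
    (hN : Squarefree N) : Nat.card {t : ZMod N // aeval t P = 0} ≤ d ^ N.primeFactors.card := by
  induction N using Nat.recOnPosPrimePosCoprime with
  | zero => exact absurd hN not_squarefree_zero
  | one =>
    rw [Nat.primeFactors_one, card_empty, pow_zero]
    exact (Finite.card_subtype_le _).trans (Nat.card_zmod 1).le
  | prime_pow p k hp hk =>
    have hk1 : k = 1 := ((Nat.squarefree_pow_iff hp.ne_one hk.ne').mp hN).2
    subst hk1
    rw [pow_one, hp.primeFactors, card_singleton, pow_one]
    exact hP p hp
  | coprime a b _ _ hab iha ihb =>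
    rw [natCard_zmod_mul_aeval_eq_zero hab, Nat.Coprime.primeFactors_mul hab,
      card_union_of_disjoint (Nat.Coprime.disjoint_primeFactors hab), pow_add]
    exact Nat.mul_le_mul (iha hN.of_mul_left) (ihb hN.of_mul_right)

theorem exists_two_pow_card_primeFactors_le {δ : ℝ} (hδ : 0 < δ) :
    ∃ C : ℝ, 1 ≤ C ∧ ∀ N : ℕ, N ≠ 0 → (2 : ℝ) ^ N.primeFactors.card ≤ C * (N : ℝ) ^ δ := by
  set K := ⌈(2 : ℝ) ^ δ⁻¹⌉₊
  refine ⟨2 ^ K, one_le_pow₀ one_le_two, fun N hN => ?_⟩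
  -- primes `p > K` satisfy `2 ≤ p ^ δ`; only those up to `K` need an extra factor `2`
  let c : ℕ → ℝ := fun p => if p ≤ K then 2 else 1
  have hc : ∀ p : ℕ, 1 ≤ p → (2 : ℝ) ≤ c p * (p : ℝ) ^ δ := by
    intro p hp
    by_cases hpK : p ≤ K
    · simpa [c, hpK] using Real.one_le_rpow (Nat.one_le_cast.mpr hp) hδ.le
    · calc (2 : ℝ) = ((2 : ℝ) ^ δ⁻¹) ^ δ := (Real.rpow_inv_rpow zero_le_two hδ.ne').symm
        _ ≤ (p : ℝ) ^ δ := by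
          gcongr
          exact (Nat.le_ceil _).trans (Nat.cast_le.mpr (not_le.mp hpK).le)
        _ = c p * (p : ℝ) ^ δ := by simp [c, hpK]
  have hcprod : ∏ p ∈ N.primeFactors, c p ≤ 2 ^ K := by
    rw [prod_ite, prod_const, prod_const_one, mul_one]
    gcongr
    · exact one_le_two
    · calc #{p ∈ N.primeFactors | p ≤ K} ≤ #(Icc 1 K) := card_le_card fun p hp => by
            simp only [mem_filter, Nat.mem_primeFactors] at hp
            exact mem_Icc.mpr ⟨hp.1.1.one_lt.le, hp.2⟩
        _ = K := by simp
  calc (2 : ℝ) ^ N.primeFactors.card = ∏ _p ∈ N.primeFactors, (2 : ℝ) := (prod_const 2).symm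
    _ ≤ ∏ p ∈ N.primeFactors, c p * (p : ℝ) ^ δ :=
        prod_le_prod (fun _ _ => zero_le_two)
          fun p hp => hc p (Nat.prime_of_mem_primeFactors hp).one_lt.le
    _ = (∏ p ∈ N.primeFactors, c p) * ((∏ p ∈ N.primeFactors, p : ℕ) : ℝ) ^ δ := by
        rw [prod_mul_distrib, Real.finsetProd_rpow _ _ fun _ _ => Nat.cast_nonneg _, Nat.cast_prod]
    _ ≤ 2 ^ K * (N : ℝ) ^ δ := by
        gcongr
        exact Nat.le_of_dvd (Nat.pos_of_ne_zero hN) (Nat.prod_primeFactors_dvd N)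

theorem sq_sum_le_ncard_mul_sum_sq {α : Type*} [Fintype α] (g : α → ℝ) (E : Set α)
    (hE : ∀ x ∉ E, g x = 0) : (∑ x, g x) ^ 2 ≤ E.ncard * ∑ x, g x ^ 2 := by
  classical
  have hsupp : ∑ x, g x = ∑ x ∈ E.toFinset, g x :=
    (sum_subset (subset_univ _) fun x _ hx => hE x (by simpa using hx)).symm
  rw [hsupp, Set.ncard_eq_toFinset_card']
  refine sq_sum_le_card_mul_sum_sq.trans ?_
  gcongr
  exact subset_univ _

noncomputable def addConv {G : Type*} [AddCommGroup G] [Fintype G] (c d : G → ℂ) (u : G) : ℂ :=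
  ∑ m, c m * d (u - m)

theorem sum_norm_sq_addConv_le {G : Type*} [AddCommGroup G] [Fintype G] [DecidableEq G]
    (h : G → ℂ) (S : Finset G) (hS : ∀ m ∉ S, h m = 0) (R : ℕ)
    (hR : ∀ u, #{m ∈ S | u - m ∈ S} ≤ R) :
    ∑ u, ‖addConv h h u‖ ^ 2 ≤ R * (∑ m, ‖h m‖ ^ 2) ^ 2 := by
  have hpoint : ∀ u, ‖addConv h h u‖ ^ 2 ≤ R * ∑ m, ‖h m‖ ^ 2 * ‖h (u - m)‖ ^ 2 := by
    intro u
    set T := {m ∈ S | u - m ∈ S}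
    have hT : addConv h h u = ∑ m ∈ T, h m * h (u - m) := by
      refine (sum_subset (subset_univ T) fun m _ hm => ?_).symm
      rcases not_and_or.mp (fun hmem => hm (mem_filter.mpr hmem)) with hm | hm <;> simp [hS _ hm]
    calc ‖addConv h h u‖ ^ 2 ≤ (∑ m ∈ T, ‖h m‖ * ‖h (u - m)‖) ^ 2 := by
          rw [hT]
          gcongr
          exact (norm_sum_le _ _).trans_eq (sum_congr rfl fun m _ => norm_mul _ _)
      _ ≤ #T * ∑ m ∈ T, (‖h m‖ * ‖h (u - m)‖) ^ 2 := sq_sum_le_card_mul_sum_sq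
      _ ≤ R * ∑ m, ‖h m‖ ^ 2 * ‖h (u - m)‖ ^ 2 := by
          simp only [mul_pow]
          gcongr
          · exact_mod_cast hR u
          · exact subset_univ T
  calc ∑ u, ‖addConv h h u‖ ^ 2 ≤ ∑ u, R * ∑ m, ‖h m‖ ^ 2 * ‖h (u - m)‖ ^ 2 :=
        sum_le_sum fun u _ => hpoint u
    _ = R * (∑ m, ‖h m‖ ^ 2) ^ 2 := by
        rw [← mul_sum, sum_comm, sq, sum_mul_sum]
        refine congrArg _ (sum_congr rfl fun m _ => ?_)
        rw [← mul_sum, ← mul_sum]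
        exact congrArg _ ((Equiv.subRight m).sum_comp fun v => ‖h v‖ ^ 2)

section

variable {N : ℕ} [NeZero N]

noncomputable def dotChar (m x : ZMod N × ZMod N) : ℂ := ZMod.stdAddChar (x.1 * m.1 + x.2 * m.2)

theorem dotChar_comm (m x : ZMod N × ZMod N) : dotChar m x = dotChar x m := by
  simp only [dotChar, mul_comm]

theorem dotChar_add (m m' x : ZMod N × ZMod N) :
    dotChar (m + m') x = dotChar m x * dotChar m' x := by
  simp only [dotChar, ← AddChar.map_add_eq_mul, Prod.fst_add, Prod.snd_add]
  ring_nf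

theorem dotChar_neg (m x : ZMod N × ZMod N) : dotChar (-m) x = conj (dotChar m x) := by
  simp only [dotChar, ← AddChar.map_neg_eq_conj, Prod.fst_neg, Prod.snd_neg]
  ring_nf

theorem sum_dotChar (m : ZMod N × ZMod N) :
    ∑ x, dotChar m x = if m = 0 then (N : ℂ) ^ 2 else 0 := by
  simp only [dotChar, AddChar.map_add_eq_mul, Fintype.sum_prod_type, ← sum_mul_sum,
    AddChar.sum_mulShift _ (ZMod.isPrimitive_stdAddChar N), ZMod.card, Prod.ext_iff]
  split_ifs <;> simp_all [sq]

theorem sum_dotChar_mul_conj (m m' : ZMod N × ZMod N) :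
    ∑ x, dotChar m x * conj (dotChar m' x) = if m = m' then (N : ℂ) ^ 2 else 0 := by
  simp only [← dotChar_neg, ← dotChar_add, sum_dotChar, ← sub_eq_add_neg, sub_eq_zero]

theorem dft_eq_sum_mul_conj_dotChar (f : ZMod N × ZMod N → ℂ) (m : ZMod N × ZMod N) :
    dft N f m = (N : ℂ)⁻¹ * ∑ x, f x * conj (dotChar m x) := by
  simp only [dft, dotChar, ZMod.stdAddChar_apply, ZMod.toCircle_apply, ← Complex.exp_conj,
    map_div₀, map_mul, map_ofNat, Complex.conj_ofReal, Complex.conj_I, map_natCast]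
  congr! 4
  ring

noncomputable def invDft (c : ZMod N × ZMod N → ℂ) (x : ZMod N × ZMod N) : ℂ :=
  (N : ℂ)⁻¹ * ∑ m, c m * dotChar m x

theorem invDft_dft (f : ZMod N × ZMod N → ℂ) : invDft (dft N f) = f := by
  ext x
  have hN : (N : ℂ) ≠ 0 := NeZero.ne _
  have horth : ∀ y, ∑ m, dotChar m x * conj (dotChar m y) = if y = x then (N : ℂ) ^ 2 else 0 := by
    intro y
    simp_rw [dotChar_comm _ x, dotChar_comm _ y, sum_dotChar_mul_conj x y, eq_comm]
  calc invDft (dft N f) x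
      = (N : ℂ)⁻¹ * (N : ℂ)⁻¹ * ∑ y, f y * ∑ m, dotChar m x * conj (dotChar m y) := by
        simp only [invDft, dft_eq_sum_mul_conj_dotChar, sum_mul, mul_sum]
        rw [sum_comm]
        exact sum_congr rfl fun y _ => sum_congr rfl fun m _ => by ring
    _ = f x := by
        simp only [horth, mul_ite, mul_zero, sum_ite_eq', mem_univ, if_true]
        field_simp

theorem sum_norm_sq_invDft (c : ZMod N × ZMod N → ℂ) :
    ∑ x, ‖invDft c x‖ ^ 2 = ∑ m, ‖c m‖ ^ 2 := by
  have hN : (N : ℂ) ≠ 0 := NeZero.ne _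
  apply Complex.ofReal_injective
  push_cast
  simp only [← Complex.mul_conj']
  calc ∑ x, invDft c x * conj (invDft c x)
      = (N : ℂ)⁻¹ * (N : ℂ)⁻¹ * ∑ m', ∑ m, c m * conj (c m') *
          ∑ x, dotChar m x * conj (dotChar m' x) := by
        simp only [invDft, map_mul, map_sum, map_inv₀, map_natCast, mul_sum, sum_mul]
        conv_lhs => rw [sum_comm]
        refine sum_congr rfl fun m' _ => ?_
        conv_lhs => rw [sum_comm]
        exact sum_congr rfl fun m _ => sum_congr rfl fun x _ => by ring
    _ = ∑ m, c m * conj (c m) := by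
        simp only [sum_dotChar_mul_conj, mul_ite, mul_zero, sum_ite_eq', mem_univ, if_true,
          mul_sum]
        exact sum_congr rfl fun m _ => by field_simp

theorem invDft_mul_invDft (c d : ZMod N × ZMod N → ℂ) (x : ZMod N × ZMod N) :
    invDft c x * invDft d x = invDft (fun u => (N : ℂ)⁻¹ * addConv c d u) x := by
  calc invDft c x * invDft d x
      = (N : ℂ)⁻¹ * (N : ℂ)⁻¹ * ∑ m, ∑ m', c m * d m' * dotChar (m + m') x := by
        rw [invDft, invDft, mul_mul_mul_comm, sum_mul_sum]
        simp only [dotChar_add]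
        exact congrArg _ (sum_congr rfl fun m _ => sum_congr rfl fun m' _ => by ring)
    _ = (N : ℂ)⁻¹ * (N : ℂ)⁻¹ * ∑ m, ∑ u, c m * d (u - m) * dotChar u x := by
        refine congrArg _ (sum_congr rfl fun m _ => ?_)
        rw [← (Equiv.subRight m).sum_comp]
        simp only [Equiv.subRight_apply, add_sub_cancel]
    _ = invDft (fun u => (N : ℂ)⁻¹ * addConv c d u) x := by
        simp only [invDft, addConv, mul_sum, sum_mul]
        rw [sum_comm]
        exact sum_congr rfl fun u _ => sum_congr rfl fun m _ => by ring

theorem mem_parabola {m : ZMod N × ZMod N} : m ∈ parabola N ↔ m.2 = m.1 ^ 2 := by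
  constructor
  · intro h
    obtain ⟨t, -, rfl⟩ := mem_image.mp h
    rfl
  · exact fun h => mem_image.mpr ⟨m.1, mem_univ _, Prod.ext rfl h.symm⟩

theorem card_filter_sub_mem_parabola_le (hN : Squarefree N) (u : ZMod N × ZMod N) :
    #{m ∈ parabola N | u - m ∈ parabola N} ≤ 2 ^ N.primeFactors.card := by
  obtain ⟨b, hb⟩ := ZMod.intCast_surjective u.1
  obtain ⟨c, hc⟩ := ZMod.intCast_surjective u.2
  -- `m = (t, t²)` and `u - m = (s, s²)` force `s = u₁ - t` and `t² + (u₁ - t)² = u₂`.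
  let P : ℤ[X] := C 2 * X ^ 2 + C (-2 * b) * X + C (b ^ 2 - c)
  have hroot : ∀ m ∈ ({m ∈ parabola N | u - m ∈ parabola N} : Finset _),
      m.1 ∈ ({t | aeval t P = 0} : Finset (ZMod N)) := by
    intro m hm
    simp only [mem_filter, mem_parabola, Prod.fst_sub, Prod.snd_sub] at hm
    simp only [mem_filter, mem_univ, true_and, P, map_add, map_mul, map_pow, aeval_C, aeval_X,
      algebraMap_int_eq, Int.coe_castRingHom]
    push_cast [hb, hc]
    linear_combination -hm.1 - hm.2
  calc #{m ∈ parabola N | u - m ∈ parabola N} ≤ #{t | aeval t P = 0} :=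
        card_le_card_of_injOn Prod.fst (fun m hm => hroot m hm) fun m hm m' hm' h => by
          simp only [coe_filter, mem_parabola] at hm hm'
          exact Prod.ext h (by rw [hm.1, hm'.1, h])
    _ = Nat.card {t : ZMod N // aeval t P = 0} := by
        rw [Nat.card_eq_fintype_card, Fintype.card_subtype]
    _ ≤ 2 ^ N.primeFactors.card := natCard_zmod_aeval_eq_zero_le_of_squarefree P 2
        (fun _ hp => natCard_zmod_aeval_quadratic_le_two hp _ _) hN

theorem natCast_sq_mul_sum_norm_pow_four_le (hN : Squarefree N) (f : ZMod N × ZMod N → ℂ)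
    (hf : ∀ m ∉ parabola N, dft N f m = 0) :
    (N : ℝ) ^ 2 * ∑ x, ‖f x‖ ^ 4 ≤ 2 ^ N.primeFactors.card * (∑ x, ‖f x‖ ^ 2) ^ 2 := by
  set F := dft N f
  have hinv : invDft F = f := invDft_dft f
  have hN0 : (N : ℝ) ≠ 0 := NeZero.ne _
  have hL2 : ∑ x, ‖f x‖ ^ 2 = ∑ m, ‖F m‖ ^ 2 := by
    conv_lhs => rw [← hinv]
    exact sum_norm_sq_invDft F
  have hL4 : ∑ x, ‖f x‖ ^ 4 = ((N : ℝ) ^ 2)⁻¹ * ∑ u, ‖addConv F F u‖ ^ 2 := by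
    calc ∑ x, ‖f x‖ ^ 4 = ∑ x, ‖invDft (fun u => (N : ℂ)⁻¹ * addConv F F u) x‖ ^ 2 := by
          simp only [← invDft_mul_invDft, hinv, norm_mul]
          exact sum_congr rfl fun x _ => by ring
      _ = ((N : ℝ) ^ 2)⁻¹ * ∑ u, ‖addConv F F u‖ ^ 2 := by
          simp only [sum_norm_sq_invDft, norm_mul, norm_inv, Complex.norm_natCast, mul_pow, mul_sum,
            inv_pow]
  have hconv := sum_norm_sq_addConv_le F (parabola N) hf _ (card_filter_sub_mem_parabola_le hN)
  rw [hL4, hL2, ← mul_assoc, mul_inv_cancel₀ (pow_ne_zero 2 hN0), one_mul]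
  exact_mod_cast hconv

theorem natCast_sq_le_ncard_mul_two_pow (hN : Squarefree N) {f : ZMod N × ZMod N → ℂ}
    (hf0 : f ≠ 0) {E : Set (ZMod N × ZMod N)} (hE : ∀ x ∉ E, f x = 0)
    (hf : ∀ m ∉ parabola N, dft N f m = 0) :
    (N : ℝ) ^ 2 ≤ E.ncard * 2 ^ N.primeFactors.card := by
  obtain ⟨x₀, hx₀⟩ := Function.ne_iff.mp hf0
  set A := ∑ x, ‖f x‖ ^ 2
  have hA : 0 < A := sum_pos' (fun x _ => by positivity) ⟨x₀, mem_univ _, by positivity⟩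
  have hCS : A ^ 2 ≤ E.ncard * ∑ x, ‖f x‖ ^ 4 := by
    calc A ^ 2 ≤ E.ncard * ∑ x, (‖f x‖ ^ 2) ^ 2 :=
          sq_sum_le_ncard_mul_sum_sq _ E fun x hx => by simp [hE x hx]
      _ = E.ncard * ∑ x, ‖f x‖ ^ 4 := by simp only [← pow_mul]
  refine le_of_mul_le_mul_right ?_ (pow_pos hA 2)
  calc (N : ℝ) ^ 2 * A ^ 2 ≤ (N : ℝ) ^ 2 * (E.ncard * ∑ x, ‖f x‖ ^ 4) := by gcongr
    _ = E.ncard * ((N : ℝ) ^ 2 * ∑ x, ‖f x‖ ^ 4) := by ring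
    _ ≤ E.ncard * (2 ^ N.primeFactors.card * A ^ 2) :=
        mul_le_mul_of_nonneg_left (natCast_sq_mul_sum_norm_pow_four_le hN f hf) (Nat.cast_nonneg _)
    _ = E.ncard * 2 ^ N.primeFactors.card * A ^ 2 := by ring

end

theorem uncertainty_parabola (ε : ℝ) (hε : 0 < ε) :
    ∃ C : ℝ, 0 < C ∧ ∀ (N : ℕ) [NeZero N], Squarefree N →
      ∀ (f : ZMod N × ZMod N → ℂ) (E : Set (ZMod N × ZMod N)),
        f ≠ 0 →
        (∀ x : ZMod N × ZMod N, x ∉ E → f x = 0) →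
        (∀ m : ZMod N × ZMod N, m ∉ parabola N → dft N f m = 0) →
        (E.ncard : ℝ) ≥ (N : ℝ) ^ ((2 : ℝ) - 2 * ε) / C ^ 8 := by
  obtain ⟨C, hC1, hC⟩ := exists_two_pow_card_primeFactors_le (by positivity : 0 < 2 * ε)
  refine ⟨C, zero_lt_one.trans_le hC1, fun N _ hN f E hf0 hE hf => ?_⟩
  have hNpos : (0 : ℝ) < N := Nat.cast_pos.mpr (NeZero.pos N)
  rw [ge_iff_le, div_le_iff₀ (by positivity), Real.rpow_sub hNpos, Real.rpow_two,
    div_le_iff₀ (by positivity)]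
  calc (N : ℝ) ^ 2 ≤ E.ncard * 2 ^ N.primeFactors.card :=
        natCast_sq_le_ncard_mul_two_pow hN hf0 hE hf
    _ ≤ E.ncard * (C * (N : ℝ) ^ (2 * ε)) := by gcongr; exact hC N (NeZero.ne N)
    _ ≤ E.ncard * C ^ 8 * (N : ℝ) ^ (2 * ε) := by
        rw [mul_assoc]
        gcongr
        exact le_self_pow₀ hC1 (by norm_num)
end
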